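/- arXiv:1912.05775 — 2 statements merged into one kernel-verified Lean document; each statement's English description precedes it below -/
import Mathlib

section
/- If G is a simple connected graph with locating chromatic number χ_L(G) = k ≥ 3, then the maximum degree of G satisfies Δ(G) ≤ 4·3^{k−3}. -/
open SimpleGraph

/-!
Fix a locating coloring `c` with `k` colors and a vertex `u`. Adjacent vertices have color codes
(distance vectors to the color classes) differing by at most one in each coordinate. A neighbour
`w` of `u` lies in a class at distance 1 from `u`, and its code is determined on its own class and
on the classes at distance 0 from `u`; it takes at most two values on each other class at
distance 1 and at most three on each class at distance `≥ 2`. As distinct vertices have distinct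
codes, if `m` classes lie at distance 1 and `b` at distance `≥ 2` (so `m + b < k`), then
`deg u ≤ m · 2^(m-1) · 3^b ≤ 4 · 3^(k-3)`.
-/

/-- Distance from a vertex to a set of vertices, `d(u,S) = min {d(u,v) : v ∈ S}`. -/
noncomputable def distToSet {V : Type*} (G : SimpleGraph V) (u : V) (S : Set V) : ℕ :=
  sInf (G.dist u '' S)

/-- `c` is a locating coloring of `G` with `k` colors: a proper coloring such that any two
distinct vertices are resolved by some color class. -/
def IsLocatingColoring {V : Type*} (G : SimpleGraph V) {k : ℕ} (c : V → Fin k) : Prop :=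
  (∀ u v : V, G.Adj u v → c u ≠ c v) ∧
  ∀ u v : V, u ≠ v →
    ∃ i : Fin k, distToSet G u (c ⁻¹' {i}) ≠ distToSet G v (c ⁻¹' {i})

/-- The locating chromatic number `χ_L(G)`: the least `k` admitting a locating `k`-coloring. -/
noncomputable def locatingChromaticNumber {V : Type*} (G : SimpleGraph V) : ℕ :=
  sInf {k : ℕ | ∃ c : V → Fin k, IsLocatingColoring G c}

open Finset

section distToSet

variable {V : Type*} {G : SimpleGraph V} {u v w : V} {S : Set V}

lemma distToSet_le_dist (hv : v ∈ S) : distToSet G u S ≤ G.dist u v :=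
  Nat.sInf_le ⟨v, hv, rfl⟩

lemma SimpleGraph.Connected.distToSet_eq_zero_iff (hG : G.Connected) :
    distToSet G u S = 0 ↔ u ∈ S ∨ S = ∅ := by
  simp [distToSet, Nat.sInf_eq_zero, hG.dist_eq_zero_iff]

lemma SimpleGraph.Connected.distToSet_le_add_one_of_adj (hG : G.Connected) (h : G.Adj u w) :
    distToSet G w S ≤ distToSet G u S + 1 := by
  rcases S.eq_empty_or_nonempty with rfl | hS
  · simp [distToSet]
  obtain ⟨v, hv, huv⟩ : ∃ v ∈ S, G.dist u v = distToSet G u S :=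
    Nat.sInf_mem (hS.image (G.dist u))
  calc distToSet G w S ≤ G.dist w v := distToSet_le_dist hv
    _ ≤ G.dist w u + G.dist u v := hG.dist_triangle
    _ = distToSet G u S + 1 := by rw [dist_eq_one_iff_adj.mpr h.symm, huv, add_comm]

lemma SimpleGraph.Connected.distToSet_eq_one_of_adj (hG : G.Connected) (h : G.Adj u w)
    (hu : u ∉ S) (hw : w ∈ S) : distToSet G u S = 1 := by
  have hle : distToSet G u S ≤ 1 := dist_eq_one_iff_adj.mpr h ▸ distToSet_le_dist hw
  have hne : distToSet G u S ≠ 0 := by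
    rw [Ne, hG.distToSet_eq_zero_iff]
    rintro (hu' | rfl)
    exacts [hu hu', hw]
  omega

end distToSet

lemma Finset.card_piFinset_le_pow_mul_pow {ι α : Type*} [Fintype ι] [DecidableEq ι]
    {S : ι → Finset α} {s t : Finset ι} {a b : ℕ} (hst : Disjoint s t)
    (hs : ∀ i ∈ s, #(S i) ≤ a) (ht : ∀ i ∈ t, #(S i) ≤ b)
    (hrest : ∀ i, i ∉ s → i ∉ t → #(S i) ≤ 1) :
    #(Fintype.piFinset S) ≤ a ^ #s * b ^ #t := by
  rw [Fintype.card_piFinset, ← prod_mul_prod_compl (s ∪ t), prod_union hst]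
  have hcompl : ∏ i ∈ (s ∪ t)ᶜ, #(S i) ≤ 1 :=
    prod_le_one' fun i hi => by
      simp only [mem_compl, mem_union, not_or] at hi
      exact hrest i hi.1 hi.2
  calc (∏ i ∈ s, #(S i)) * (∏ i ∈ t, #(S i)) * ∏ i ∈ (s ∪ t)ᶜ, #(S i)
      ≤ a ^ #s * b ^ #t * 1 := by
        gcongr
        exacts [prod_le_pow_card _ _ _ hs, prod_le_pow_card _ _ _ ht]
    _ = a ^ #s * b ^ #t := mul_one _

lemma add_one_mul_two_pow_le (m : ℕ) : 3 * ((m + 1) * 2 ^ m) ≤ 4 * 3 ^ m := by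
  induction m with
  | zero => norm_num
  | succ m ih =>
    rcases m with _ | m
    · norm_num
    · rw [pow_succ, pow_succ 3]
      nlinarith [pow_pos (two_pos : (0 : ℕ) < 2) (m + 1)]

lemma mul_two_pow_mul_three_pow_le {m b k : ℕ} (hk : 3 ≤ k) (h : m + b < k) :
    m * 2 ^ (m - 1) * 3 ^ b ≤ 4 * 3 ^ (k - 3) := by
  rcases m with _ | m
  · simp
  have hexp : m + b ≤ k - 2 := by omega
  have : 3 * ((m + 1) * 2 ^ m * 3 ^ b) ≤ 3 * (4 * 3 ^ (k - 3)) :=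
    calc 3 * ((m + 1) * 2 ^ m * 3 ^ b) ≤ 4 * 3 ^ m * 3 ^ b := by
          rw [← mul_assoc]; exact Nat.mul_le_mul_right _ (add_one_mul_two_pow_le m)
      _ = 4 * 3 ^ (m + b) := by rw [pow_add, mul_assoc]
      _ ≤ 4 * 3 ^ (k - 2) := by gcongr; norm_num
      _ = 3 * (4 * 3 ^ (k - 3)) := by rw [show k - 2 = k - 3 + 1 by omega, pow_succ]; ring
  simpa using this

lemma exists_isLocatingColoring_of_locatingChromaticNumber_eq {V : Type*} {G : SimpleGraph V}
    {k : ℕ} (hk : k ≠ 0) (h : locatingChromaticNumber G = k) :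
    ∃ c : V → Fin k, IsLocatingColoring G c :=
  h ▸ Nat.sInf_mem (Nat.nonempty_of_pos_sInf (h ▸ Nat.pos_of_ne_zero hk))

section colorCode

variable {V : Type*} {G : SimpleGraph V} {k : ℕ} {c : V → Fin k}

noncomputable def colorCode (G : SimpleGraph V) (c : V → Fin k) (u : V) (i : Fin k) : ℕ :=
  distToSet G u (c ⁻¹' {i})

lemma IsLocatingColoring.colorCode_injective (hc : IsLocatingColoring G c) :
    Function.Injective (colorCode G c) := by
  intro u v huv
  by_contra hne
  obtain ⟨i, hi⟩ := hc.2 u v hne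
  exact hi (congrFun huv i)

noncomputable def neighborCodeCandidates (G : SimpleGraph V) (c : V → Fin k) (u : V)
    (j i : Fin k) : Finset ℕ :=
  if 2 ≤ colorCode G c u i then Icc (colorCode G c u i - 1) (colorCode G c u i + 1)
  else if colorCode G c u i = 1 ∧ i ≠ j then {1, 2}
  else {if i = c u then 1 else 0}

lemma card_piFinset_neighborCodeCandidates_le (u : V) (j : Fin k) :
    #(Fintype.piFinset (neighborCodeCandidates G c u j)) ≤
      2 ^ #(({i | colorCode G c u i = 1} : Finset (Fin k)).erase j) *
        3 ^ #({i | 2 ≤ colorCode G c u i} : Finset (Fin k)) := by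
  refine card_piFinset_le_pow_mul_pow ?_ (fun i hi => ?_) (fun i hi => ?_) (fun i hA hB => ?_)
  · refine Disjoint.mono_left (erase_subset _ _) (disjoint_filter.2 fun i _ h1 h2 => ?_)
    omega
  · obtain ⟨hij, hi⟩ := mem_erase.1 hi
    rw [mem_filter] at hi
    simp [neighborCodeCandidates, hi.2, hij]
  · rw [mem_filter] at hi
    rw [neighborCodeCandidates, if_pos hi.2, Nat.card_Icc]
    omega
  · simp only [mem_erase, mem_filter, mem_univ, true_and, not_and'] at hA hB
    rw [neighborCodeCandidates, if_neg hB, if_neg fun h => hA h.1 h.2, card_singleton]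

lemma colorCode_eq_one_of_adj (hG : G.Connected) (hc : ∀ u v, G.Adj u v → c u ≠ c v) {u w : V}
    (h : G.Adj u w) : colorCode G c u (c w) = 1 :=
  hG.distToSet_eq_one_of_adj h (hc u w h) rfl

lemma colorCode_mem_neighborCodeCandidates (hG : G.Connected)
    (hc : ∀ u v, G.Adj u v → c u ≠ c v) {u w : V} (h : G.Adj u w) (i : Fin k) :
    colorCode G c w i ∈ neighborCodeCandidates G c u (c w) i := by
  have hup : colorCode G c w i ≤ colorCode G c u i + 1 := hG.distToSet_le_add_one_of_adj h
  have hdown : colorCode G c u i ≤ colorCode G c w i + 1 := hG.distToSet_le_add_one_of_adj h.symm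
  unfold neighborCodeCandidates
  split_ifs with hfar hnear hcu
  · rw [mem_Icc]
    omega
  · have hpos : colorCode G c w i ≠ 0 := by
      rw [colorCode, Ne, hG.distToSet_eq_zero_iff]
      rintro (hw | hempty)
      · exact hnear.2 hw.symm
      · simp [colorCode, distToSet, hempty] at hnear
    simp only [mem_insert, mem_singleton]
    omega
  · rw [mem_singleton, hcu]
    exact hG.distToSet_eq_one_of_adj h.symm (fun hw => hc u w h hw.symm) rfl
  · -- the remaining classes at distance 0 from `u` are empty, and `sInf ∅ = 0`
    rw [mem_singleton, colorCode, hG.distToSet_eq_zero_iff]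
    by_cases hiw : i = c w
    · exact Or.inl hiw.symm
    · have hu : colorCode G c u i = 0 := by omega
      rw [colorCode, hG.distToSet_eq_zero_iff] at hu
      exact Or.inr (hu.resolve_left fun hu => hcu hu.symm)

lemma IsLocatingColoring.exists_degree_le [Fintype V] [DecidableRel G.Adj] (hG : G.Connected)
    (hc : IsLocatingColoring G c) (u : V) :
    ∃ m b, m + b < k ∧ G.degree u ≤ m * 2 ^ (m - 1) * 3 ^ b := by
  set A : Finset (Fin k) := {i | colorCode G c u i = 1}
  set B : Finset (Fin k) := {i | 2 ≤ colorCode G c u i}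
  refine ⟨#A, #B, ?_, ?_⟩
  · have hAB : Disjoint A B := disjoint_filter.2 fun i _ h1 h2 => by omega
    have hcu : c u ∉ A ∪ B := by
      have : colorCode G c u (c u) = 0 := hG.distToSet_eq_zero_iff.2 (Or.inl rfl)
      simp [A, B, this]
    calc #A + #B = #(A ∪ B) := (card_union_of_disjoint hAB).symm
      _ < Fintype.card (Fin k) := card_lt_univ_of_notMem hcu
      _ = k := Fintype.card_fin k
  · calc G.degree u = #(G.neighborFinset u) := (card_neighborFinset_eq_degree G u).symm
      _ ≤ #(A.biUnion fun j => Fintype.piFinset (neighborCodeCandidates G c u j)) := by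
        refine card_le_card_of_injOn (colorCode G c) (fun w hw => ?_) hc.colorCode_injective.injOn
        have h : G.Adj u w := (mem_neighborFinset G u w).1 hw
        have hA : c w ∈ A := mem_filter.2 ⟨mem_univ _, colorCode_eq_one_of_adj hG hc.1 h⟩
        exact mem_biUnion.2
          ⟨c w, hA, Fintype.mem_piFinset.2 (colorCode_mem_neighborCodeCandidates hG hc.1 h)⟩
      _ ≤ ∑ j ∈ A, #(Fintype.piFinset (neighborCodeCandidates G c u j)) := card_biUnion_le
      _ ≤ ∑ j ∈ A, 2 ^ (#A - 1) * 3 ^ #B := sum_le_sum fun j hj =>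
        card_erase_of_mem hj ▸ card_piFinset_neighborCodeCandidates_le u j
      _ = #A * 2 ^ (#A - 1) * 3 ^ #B := by rw [sum_const, smul_eq_mul, mul_assoc]

end colorCode

/-- If `G` is a simple connected graph with locating chromatic number
`χ_L(G) = k ≥ 3`, then its maximum degree satisfies `Δ(G) ≤ 4 · 3^(k-3)`. -/
theorem maxDegree_le_of_locatingChromaticNumber {V : Type*} [Fintype V]
    (G : SimpleGraph V) [DecidableRel G.Adj] (hG : G.Connected)
    (k : ℕ) (hk : 3 ≤ k) (hχ : locatingChromaticNumber G = k) :
    G.maxDegree ≤ 4 * 3 ^ (k - 3) := by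
  obtain ⟨c, hc⟩ := exists_isLocatingColoring_of_locatingChromaticNumber_eq (by omega) hχ
  refine G.maxDegree_le_of_forall_degree_le _ fun u => ?_
  obtain ⟨m, b, hmb, hdeg⟩ := hc.exists_degree_le hG u
  exact hdeg.trans (mul_two_pow_mul_three_pow_le hk hmb)
end

section
/- Let G = S_n(a_1, a_2, …, a_n) be a palm and let G' = S_n(a_1, …, a_i + 1, …, a_n) be the palm obtained from G by lengthening its i-th leg by one vertex. Then χ_L(G') ≥ χ_L(G) − 1. -/
open SimpleGraph

/-- The vertex set of the palm `S_n(a_1, …, a_n)`: a hub `none` and, for each leg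
`i : Fin n` (representing leg `i+1`), vertices `j : Fin (a (i+1))`
(vertex `some ⟨i, j⟩` represents `a_{i+1, j+1}`). -/
def PalmVert (n : ℕ) (a : ℕ → ℕ) : Type :=
  Option ((i : Fin n) × Fin (a ((i : ℕ) + 1)))

/-- The palm `S_n(a_1, …, a_n)`: the star `K_{1,n}` whose `i`-th edge has been subdivided
`a_i - 1` times; the hub is joined to the first vertex of each leg, and consecutive
vertices along a leg are adjacent. -/
def Palm (n : ℕ) (a : ℕ → ℕ) : SimpleGraph (PalmVert n a) :=
  SimpleGraph.fromRel fun u v =>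
    match u, v with
    | none, some ⟨_, j⟩ => (j : ℕ) = 0
    | some ⟨i, j⟩, some ⟨i', j'⟩ => (i : ℕ) = (i' : ℕ) ∧ (j' : ℕ) = (j : ℕ) + 1
    | _, _ => False

/-!
The palm `G` is the lengthened palm `G'` with the pendant vertex `w` at the end of the lengthened
leg deleted, and `G` sits isometrically inside `G'` because no shortest path passes through a leaf.
Take an optimal locating colouring of `G'`, restrict it to `G` and give the neighbour `t` of `w` a
fresh colour. Two vertices at different distances from `t` are resolved by the class `{t}`. Two
vertices at the same distance from `t` are also at the same distance from `w`, so the colour class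
resolving them in `G'` still resolves them once `t` and `w` are removed from it.
-/

namespace SimpleGraph

variable {V W : Type*} {G : SimpleGraph V} {H : SimpleGraph W}

lemma Embedding.exists_walk_of_support_subset_range (f : G ↪g H) {u v : V}
    (p : H.Walk (f u) (f v)) (hp : ∀ z ∈ p.support, z ∈ Set.range f) :
    ∃ q : G.Walk u v, q.length = p.length := by
  have hu : f.isoInduceRange.symm.toHom ⟨f u, hp _ p.start_mem_support⟩ = u :=
    f.isoInduceRange.symm_apply_apply u
  have hv : f.isoInduceRange.symm.toHom ⟨f v, hp _ p.end_mem_support⟩ = v :=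
    f.isoInduceRange.symm_apply_apply v
  refine ⟨((p.induce _ hp).map f.isoInduceRange.symm.toHom).copy hu hv, ?_⟩
  simp only [Walk.length_copy, Walk.length_map]
  exact (Walk.length_map _ _).symm.trans (congrArg Walk.length (p.map_induce hp))

lemma Embedding.dist_map_eq_of_range_eq_compl (f : G ↪g H) {w : W}
    (hrange : Set.range f = {w}ᶜ) (hw : (H.neighborSet w).Subsingleton) (hG : G.Preconnected)
    (u v : V) : H.dist (f u) (f v) = G.dist u v := by
  have hfw : ∀ x, f x ≠ w := fun x =>
    Set.mem_compl_singleton_iff.1 (hrange ▸ Set.mem_range_self x)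
  obtain ⟨p, hp⟩ := (hG u v).exists_walk_length_eq_dist
  obtain ⟨p', hp'path, hp'⟩ := ((hG u v).map f.toHom).exists_path_of_dist
  have hwp' : w ∉ p'.support :=
    hp'path.isTrail.not_mem_support_of_subsingleton_neighborSet (hfw u).symm (hfw v).symm hw
  obtain ⟨q, hq⟩ := f.exists_walk_of_support_subset_range p' fun z hz =>
    hrange ▸ fun h : z = w => hwp' (h ▸ hz)
  refine le_antisymm ?_ ?_
  · calc H.dist (f u) (f v) ≤ (p.map f.toHom).length := dist_le _
      _ = G.dist u v := by rw [Walk.length_map, hp]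
  · calc G.dist u v ≤ q.length := dist_le q
      _ = H.dist (f u) (f v) := hq.trans hp'

lemma dist_eq_dist_add_one_of_pendant {w t x : W} (hw : ∀ y, H.Adj w y ↔ y = t)
    (hx : x ≠ w) (hreach : H.Reachable x w) : H.dist x w = H.dist x t + 1 := by
  obtain ⟨p, hp⟩ := hreach.exists_walk_length_eq_dist
  have hnil : ¬p.Nil := Walk.not_nil_of_ne hx
  have hpos : 0 < p.length := Walk.not_nil_iff_lt_length.1 hnil
  have hpen : p.penultimate = t := (hw _).1 (p.adj_penultimate hnil).symm
  have hdrop : H.dist x t ≤ p.length - 1 := by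
    simpa only [Walk.length_dropLast, hpen] using dist_le p.dropLast
  have htri := ((hw t).2 rfl).reachable.symm.dist_triangle_right x
  have htw : H.dist t w = 1 := dist_eq_one_iff_adj.2 ((hw t).2 rfl).symm
  omega

end SimpleGraph

section distToSet

variable {V W : Type*} {G : SimpleGraph V} {H : SimpleGraph W}

lemma distToSet_singleton (u x : V) : distToSet G u {x} = G.dist u x := by
  rw [distToSet, Set.image_singleton, csInf_singleton]

lemma distToSet_eq_zero_of_mem {u : V} {S : Set V} (hu : u ∈ S) : distToSet G u S = 0 :=
  Nat.sInf_eq_zero.2 (Or.inl ⟨u, hu, dist_self⟩)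

lemma distToSet_ne_zero_of_notMem (hG : G.Preconnected) {v : V} {S : Set V} (hS : S.Nonempty)
    (hv : v ∉ S) : distToSet G v S ≠ 0 := by
  rintro h
  rcases Nat.sInf_eq_zero.1 h with ⟨x, hxS, hx⟩ | hempty
  · exact hv (((hG v x).dist_eq_zero_iff.1 hx) ▸ hxS)
  · exact (hS.image _).ne_empty hempty

lemma distToSet_image_of_dist_eq {f : V → W} (hf : ∀ u v, H.dist (f u) (f v) = G.dist u v)
    (u : V) (S : Set V) : distToSet H (f u) (f '' S) = distToSet G u S := by
  rw [distToSet, distToSet, Set.image_image]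
  exact congrArg sInf (Set.image_congr fun v _ => hf u v)

lemma distToSet_le_of_distToSet_diff_eq {x y : V} {S E : Set V}
    (hE : ∀ z ∈ E, G.dist x z = G.dist y z)
    (hdiff : distToSet G x (S \ E) = distToSet G y (S \ E)) :
    distToSet G x S ≤ distToSet G y S := by
  rcases S.eq_empty_or_nonempty with rfl | hS
  · simp [distToSet]
  obtain ⟨z, hzS, hz⟩ := Nat.sInf_mem (hS.image (G.dist y))
  rw [distToSet, distToSet, ← hz]
  by_cases hzE : z ∈ E
  · exact (Nat.sInf_le (Set.mem_image_of_mem _ hzS)).trans_eq (hE z hzE)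
  · have hSE : (S \ E).Nonempty := ⟨z, hzS, hzE⟩
    obtain ⟨z', hz'S, hz'⟩ := Nat.sInf_mem (hSE.image (G.dist x))
    calc sInf (G.dist x '' S) ≤ G.dist x z' := Nat.sInf_le ⟨z', hz'S.1, rfl⟩
      _ = distToSet G y (S \ E) := hz'.trans hdiff
      _ ≤ G.dist y z := Nat.sInf_le ⟨z, ⟨hzS, hzE⟩, rfl⟩

lemma distToSet_eq_of_distToSet_diff_eq {x y : V} {S E : Set V}
    (hE : ∀ z ∈ E, G.dist x z = G.dist y z)
    (hdiff : distToSet G x (S \ E) = distToSet G y (S \ E)) :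
    distToSet G x S = distToSet G y S :=
  le_antisymm (distToSet_le_of_distToSet_diff_eq hE hdiff)
    (distToSet_le_of_distToSet_diff_eq (fun z hz => (hE z hz).symm) hdiff.symm)

end distToSet

section LocatingColoring

variable {V : Type*} {G : SimpleGraph V}

lemma distToSet_ne_of_color_ne (hG : G.Preconnected) {k : ℕ} (c : V → Fin k) {u v : V}
    (h : c u ≠ c v) : distToSet G u (c ⁻¹' {c u}) ≠ distToSet G v (c ⁻¹' {c u}) := by
  rw [distToSet_eq_zero_of_mem (S := c ⁻¹' {c u}) rfl]
  exact (distToSet_ne_zero_of_notMem (S := c ⁻¹' {c u}) hG ⟨u, rfl⟩ fun hv => h hv.symm).symm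

lemma exists_isLocatingColoring [Finite V] (hG : G.Preconnected) :
    ∃ k, ∃ c : V → Fin k, IsLocatingColoring G c := by
  obtain ⟨k, ⟨e⟩⟩ := Finite.exists_equiv_fin V
  refine ⟨k, e, fun u v huv => e.injective.ne huv.ne, fun u v huv => ⟨e u, ?_⟩⟩
  exact distToSet_ne_of_color_ne hG e (e.injective.ne huv)

lemma exists_isLocatingColoring_locatingChromaticNumber [Finite V] (hG : G.Preconnected) :
    ∃ c : V → Fin (locatingChromaticNumber G), IsLocatingColoring G c :=
  Nat.sInf_mem (exists_isLocatingColoring hG)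

lemma locatingChromaticNumber_le {k : ℕ} {c : V → Fin k} (hc : IsLocatingColoring G c) :
    locatingChromaticNumber G ≤ k :=
  Nat.sInf_le ⟨c, hc⟩

def withFreshColor [DecidableEq V] {k : ℕ} (c : V → Fin k) (t : V) : V → Fin (k + 1) :=
  fun x => if x = t then Fin.last k else (c x).castSucc

variable [DecidableEq V] {k : ℕ} (c : V → Fin k) (t : V)

lemma withFreshColor_eq_iff {x y : V} : withFreshColor c t x = withFreshColor c t y ↔
    x = y ∨ x ≠ t ∧ y ≠ t ∧ c x = c y := by
  unfold withFreshColor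
  split_ifs <;> grind [Fin.castSucc_ne_last, Fin.castSucc_inj]

lemma withFreshColor_preimage_last : withFreshColor c t ⁻¹' {Fin.last k} = {t} := by
  ext x
  by_cases hx : x = t <;> simp [withFreshColor, hx, Fin.castSucc_ne_last]

lemma withFreshColor_preimage_castSucc (ℓ : Fin k) :
    withFreshColor c t ⁻¹' {ℓ.castSucc} = c ⁻¹' {ℓ} \ {t} := by
  ext x
  by_cases hx : x = t <;> simp [withFreshColor, hx, Ne.symm (Fin.castSucc_ne_last _)]

end LocatingColoring

section Pendant

variable {V W : Type*} {G : SimpleGraph V} {H : SimpleGraph W} {w : W} {t : V}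

lemma Set.image_preimage_diff_singleton_of_range_eq_compl {f : V → W}
    (hf : Function.Injective f) (hrange : Set.range f = {w}ᶜ) (S : Set W) :
    f '' (f ⁻¹' S \ {t}) = S \ {f t, w} := by
  rw [Set.image_sdiff hf, Set.image_preimage_eq_inter_range, hrange, Set.image_singleton,
    ← Set.sdiff_eq, Set.sdiff_sdiff, Set.union_singleton]

theorem IsLocatingColoring.withFreshColor_comp_of_pendant [DecidableEq V] {k : ℕ}
    {c : W → Fin k} (hc : IsLocatingColoring H c) (f : G ↪g H) (hrange : Set.range f = {w}ᶜ)
    (hw : ∀ y, H.Adj w y ↔ y = f t) (hG : G.Preconnected) (hH : H.Preconnected) :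
    IsLocatingColoring G (withFreshColor (c ∘ f) t) := by
  have hleaf : (H.neighborSet w).Subsingleton := fun y hy y' hy' =>
    ((hw y).1 hy).trans ((hw y').1 hy').symm
  have hdist := f.dist_map_eq_of_range_eq_compl hrange hleaf hG
  have hfw : ∀ x, f x ≠ w := fun x =>
    Set.mem_compl_singleton_iff.1 (hrange ▸ Set.mem_range_self x)
  refine ⟨fun u v huv h => ?_, fun u v huv => ?_⟩
  · rcases (withFreshColor_eq_iff _ _).1 h with rfl | ⟨-, -, h⟩
    · exact huv.ne rfl
    · exact hc.1 _ _ (f.map_adj_iff.2 huv) h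
  by_cases hdt : G.dist u t = G.dist v t
  swap
  · refine ⟨Fin.last k, ?_⟩
    rwa [withFreshColor_preimage_last, distToSet_singleton, distToSet_singleton]
  obtain ⟨ℓ, hℓ⟩ := hc.2 (f u) (f v) (f.injective.ne huv)
  refine ⟨ℓ.castSucc, fun h => hℓ (distToSet_eq_of_distToSet_diff_eq (E := {f t, w}) ?_ ?_)⟩
  · simp only [Set.mem_insert_iff, Set.mem_singleton_iff, forall_eq_or_imp, forall_eq]
    rw [H.dist_eq_dist_add_one_of_pendant hw (hfw u) (hH _ _),
      H.dist_eq_dist_add_one_of_pendant hw (hfw v) (hH _ _), hdist, hdist]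
    exact ⟨hdt, by rw [hdt]⟩
  · rwa [withFreshColor_preimage_castSucc, Set.preimage_comp,
      ← distToSet_image_of_dist_eq hdist, ← distToSet_image_of_dist_eq hdist,
      Set.image_preimage_diff_singleton_of_range_eq_compl f.injective hrange] at h

theorem locatingChromaticNumber_le_add_one_of_pendant [Finite W] (f : G ↪g H)
    (hrange : Set.range f = {w}ᶜ) (hw : ∀ y, H.Adj w y ↔ y = f t) (hG : G.Preconnected)
    (hH : H.Preconnected) : locatingChromaticNumber G ≤ locatingChromaticNumber H + 1 := by
  classical
  obtain ⟨c, hc⟩ := exists_isLocatingColoring_locatingChromaticNumber hH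
  exact locatingChromaticNumber_le (hc.withFreshColor_comp_of_pendant f hrange hw hG hH)

end Pendant

namespace Palm

variable {n : ℕ} {a b : ℕ → ℕ}

instance : Finite (PalmVert n a) := inferInstanceAs (Finite (Option _))

@[simp] lemma adj_none_some {p : Fin n} {j : Fin (a (p + 1))} :
    (Palm n a).Adj none (some ⟨p, j⟩) ↔ (j : ℕ) = 0 :=
  (fromRel_adj _ _ _).trans (by simpa using fun _ => nofun)

@[simp] lemma adj_some_none {p : Fin n} {j : Fin (a (p + 1))} :
    (Palm n a).Adj (some ⟨p, j⟩) none ↔ (j : ℕ) = 0 :=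
  (fromRel_adj _ _ _).trans (by simpa using fun _ => nofun)

@[simp] lemma adj_some_some {p q : Fin n} {j : Fin (a (p + 1))} {j' : Fin (a (q + 1))} :
    (Palm n a).Adj (some ⟨p, j⟩) (some ⟨q, j'⟩) ↔
      p = q ∧ ((j' : ℕ) = j + 1 ∨ (j : ℕ) = j' + 1) := by
  refine (fromRel_adj _ _ _).trans ?_
  simp only [Fin.val_inj]
  constructor
  · rintro ⟨-, ⟨rfl, h⟩ | ⟨rfl, h⟩⟩ <;> simp [h]
  · rintro ⟨rfl, h⟩
    refine ⟨fun heq => ?_, by simpa using h⟩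
    obtain rfl : j = j' := by simpa using Option.some.inj heq
    omega

@[simp] lemma not_adj_none_none : ¬(Palm n a).Adj none none := (Palm n a).irrefl

lemma some_eq_some_iff {p q : Fin n} {j : Fin (a (p + 1))} {j' : Fin (a (q + 1))} :
    (some ⟨p, j⟩ : PalmVert n a) = some ⟨q, j'⟩ ↔ p = q ∧ (j : ℕ) = j' := by
  constructor
  · intro h
    obtain ⟨rfl, h⟩ := Sigma.mk.inj_iff.1 (Option.some.inj h)
    exact ⟨rfl, by rw [eq_of_heq h]⟩
  · rintro ⟨rfl, h⟩
    rw [Fin.ext h]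

lemma some_ne_none {p : Fin n} {j : Fin (a (p + 1))} :
    (some ⟨p, j⟩ : PalmVert n a) ≠ none := nofun

lemma reachable_none (v : PalmVert n a) : (Palm n a).Reachable none v := by
  rcases v with _ | ⟨p, j, hj⟩
  · rfl
  induction j with
  | zero => exact (adj_none_some.2 rfl).reachable
  | succ j ih => exact (ih (by omega)).trans (adj_some_some.2 ⟨rfl, Or.inl rfl⟩).reachable

lemma preconnected : (Palm n a).Preconnected := fun u v =>
  (reachable_none u).symm.trans (reachable_none v)

section Inclusion

variable (hab : a ≤ b)

def inclusion : PalmVert n a → PalmVert n b :=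
  Option.map (Sigma.map id fun _ => Fin.castLE (hab _))

@[simp] lemma inclusion_none : (inclusion hab none : PalmVert n b) = none := rfl

@[simp] lemma inclusion_some (p : Fin n) (j : Fin (a (p + 1))) :
    inclusion hab (some ⟨p, j⟩) = some ⟨p, Fin.castLE (hab _) j⟩ := rfl

lemma adj_inclusion_iff {u v : PalmVert n a} :
    (Palm n b).Adj (inclusion hab u) (inclusion hab v) ↔ (Palm n a).Adj u v := by
  rcases u with _ | ⟨p, j⟩ <;> rcases v with _ | ⟨q, j'⟩ <;> simp

def embedding : Palm n a ↪g Palm n b where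
  toFun := inclusion hab
  inj' := Option.map_injective
    (Function.injective_id.sigma_map fun _ => Fin.castLE_injective (hab _))
  map_rel_iff' := adj_inclusion_iff hab

end Inclusion

def lengthen (a : ℕ → ℕ) (i : ℕ) : ℕ → ℕ := Function.update a i (a i + 1)

lemma le_lengthen (a : ℕ → ℕ) (i : ℕ) : a ≤ lengthen a i := by
  intro j
  rcases eq_or_ne j i with rfl | hj
  · simp [lengthen]
  · rw [lengthen, Function.update_of_ne hj]

lemma lengthen_self (a : ℕ → ℕ) (i : ℕ) : lengthen a i i = a i + 1 := by simp [lengthen]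

lemma lengthen_of_ne (a : ℕ → ℕ) {i j : ℕ} (h : j ≠ i) : lengthen a i j = a j := by
  simp [lengthen, h]

variable (P : Fin n)

def newVert : PalmVert n (lengthen a (P + 1)) :=
  some ⟨P, ⟨a (P + 1), by simp [lengthen_self]⟩⟩

def legEnd : PalmVert n a :=
  if h : a (P + 1) = 0 then none else some ⟨P, ⟨a (P + 1) - 1, by omega⟩⟩

lemma legEnd_of_eq_zero (h : a (P + 1) = 0) : (legEnd P : PalmVert n a) = none := dif_pos h

lemma legEnd_of_ne_zero (h : a (P + 1) ≠ 0) :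
    (legEnd P : PalmVert n a) = some ⟨P, ⟨a (P + 1) - 1, by omega⟩⟩ := dif_neg h

lemma inclusion_lengthen_ne_newVert (x : PalmVert n a) :
    inclusion (le_lengthen a (P + 1)) x ≠ newVert P := by
  rcases x with _ | ⟨p, j⟩
  · exact some_ne_none.symm
  · intro h
    obtain ⟨rfl, hj⟩ := some_eq_some_iff.1 h
    have := j.isLt
    simp only [id_eq, Fin.val_castLE] at hj
    omega

lemma exists_inclusion_lengthen_eq {z : PalmVert n (lengthen a (P + 1))} (hz : z ≠ newVert P) :
    ∃ x, inclusion (le_lengthen a (P + 1)) x = z := by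
  rcases z with _ | ⟨p, j, hj⟩
  · exact ⟨none, rfl⟩
  by_cases hp : p = P
  · subst hp
    have hja : j ≠ a (p + 1) := fun h => hz (some_eq_some_iff.2 ⟨rfl, h⟩)
    rw [lengthen_self] at hj
    exact ⟨some ⟨p, j, by omega⟩, some_eq_some_iff.2 ⟨rfl, rfl⟩⟩
  · rw [lengthen_of_ne _ (by simpa [Fin.val_inj] using hp)] at hj
    exact ⟨some ⟨p, j, hj⟩, rfl⟩

lemma range_inclusion_lengthen :
    Set.range (inclusion (le_lengthen a (P + 1))) = {newVert P}ᶜ :=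
  Set.ext fun _ => ⟨by rintro ⟨x, rfl⟩; exact inclusion_lengthen_ne_newVert P x,
    exists_inclusion_lengthen_eq P⟩

lemma adj_newVert_iff (y : PalmVert n (lengthen a (P + 1))) :
    (Palm n (lengthen a (P + 1))).Adj (newVert P) y ↔
      y = inclusion (le_lengthen a (P + 1)) (legEnd P) := by
  rcases y with _ | ⟨p, j⟩
  · refine adj_some_none.trans ?_
    by_cases h : a (P + 1) = 0
    · rw [legEnd_of_eq_zero P h]
      exact iff_of_true h rfl
    · rw [legEnd_of_ne_zero P h]
      exact iff_of_false h some_ne_none.symm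
  · refine adj_some_some.trans ?_
    have hj : (j : ℕ) < lengthen a (P + 1) (p + 1) := j.isLt
    have hlen := lengthen_self a (P + 1)
    by_cases h : a (P + 1) = 0
    · rw [legEnd_of_eq_zero P h]
      refine iff_of_false ?_ some_ne_none
      rintro ⟨rfl, hj'⟩
      simp only at hj'
      omega
    · rw [legEnd_of_ne_zero P h]
      refine Iff.trans ?_ some_eq_some_iff.symm
      simp only [Fin.val_castLE]
      constructor
      · rintro ⟨rfl, hj'⟩
        exact ⟨rfl, by omega⟩
      · rintro ⟨rfl, hj'⟩
        simp only [true_and]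
        omega

theorem locatingChromaticNumber_le_lengthen_add_one :
    locatingChromaticNumber (Palm n a) ≤
      locatingChromaticNumber (Palm n (lengthen a (P + 1))) + 1 :=
  locatingChromaticNumber_le_add_one_of_pendant (embedding (le_lengthen a _))
    (range_inclusion_lengthen P) (adj_newVert_iff P) preconnected preconnected

end Palm

theorem locatingChromaticNumber_palm_lengthen_general (n : ℕ) (a : ℕ → ℕ)
    (i : ℕ) (hi₁ : 1 ≤ i) (hi₂ : i ≤ n) :
    (locatingChromaticNumber (Palm n a) : ℤ) - 1 ≤
      (locatingChromaticNumber (Palm n (Function.update a i (a i + 1))) : ℤ) := by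
  obtain ⟨P, rfl⟩ : ∃ P : Fin n, i = P + 1 :=
    ⟨⟨i - 1, by omega⟩, (Nat.sub_add_cancel hi₁).symm⟩
  have := Palm.locatingChromaticNumber_le_lengthen_add_one (a := a) P
  rw [Palm.lengthen] at this
  omega

/-- If `G = S_n(a_1, …, a_n)` is a palm and `G'` is obtained from `G` by
lengthening its `i`-th leg by one vertex, then `χ_L(G') ≥ χ_L(G) - 1`. -/
theorem locatingChromaticNumber_palm_lengthen (n : ℕ) (hn : 2 ≤ n) (a : ℕ → ℕ)
    (ha : ∀ j, 1 ≤ j → j ≤ n → 1 ≤ a j) (i : ℕ) (hi₁ : 1 ≤ i) (hi₂ : i ≤ n) :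
    (locatingChromaticNumber (Palm n a) : ℤ) - 1 ≤
      (locatingChromaticNumber (Palm n (Function.update a i (a i + 1))) : ℤ) :=
  locatingChromaticNumber_palm_lengthen_general n a i hi₁ hi₂
end
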